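/- Let (Ω, F, P) be a probability space, H ⊆ F a sub-σ-algebra, and S an ℝᵐ-valued random variable. Suppose there exist H-measurable random variables (αₘ)_{m≥1} with S ∈ {αₘ : m ≥ 1} almost surely and P(S = αₘ | H) > 0 a.s. for every m. Then for any H ⊗ B(ℝᵐ)-measurable function f : Ω × ℝᵐ → ℝ (with all relevant suprema finite), the conditional essential supremum satisfies esssup_H f(S) = sup_{m ≥ 1} f(αₘ) almost surely. -/

import Mathlib

open MeasureTheory

/-- If `S` takes countably many `H`-measurable values `α n`, each with a.s.
positive conditional probability, then the conditional essential supremum of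
`f(S)` given `H` is the pointwise supremum `sup_n f(α n)`. -/
theorem condEsssup_eq_sup_of_countable_support
    {Ω : Type*} (H : MeasurableSpace Ω) [m0 : MeasurableSpace Ω] (μ : Measure Ω) [IsProbabilityMeasure μ]
    (hH : H ≤ m0) (m : ℕ)
    (S : Ω → (Fin m → ℝ)) (hS : Measurable S)
    (α : ℕ → Ω → (Fin m → ℝ)) (hα : ∀ n, Measurable[H] (α n))
    (hcover : ∀ᵐ ω ∂μ, ∃ n, S ω = α n ω)
    (hpos : ∀ n, ∀ᵐ ω ∂μ,
      0 < (μ[Set.indicator {ω' | S ω' = α n ω'} (fun _ => (1 : ℝ)) | H]) ω)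
    (f : Ω → (Fin m → ℝ) → ℝ)
    (hf : Measurable[H.prod inferInstance] (fun p : Ω × (Fin m → ℝ) => f p.1 p.2))
    (hbdd : ∀ ω, BddAbove (Set.range fun n => f ω (α n ω)))
    (Y : Ω → ℝ) (hY_meas : Measurable[H] Y)
    (hY_ge : ∀ᵐ ω ∂μ, f ω (S ω) ≤ Y ω)
    (hY_min : ∀ Y' : Ω → ℝ, Measurable[H] Y' →
      (∀ᵐ ω ∂μ, f ω (S ω) ≤ Y' ω) → ∀ᵐ ω ∂μ, Y ω ≤ Y' ω) :
    ∀ᵐ ω ∂μ, Y ω = ⨆ n, f ω (α n ω) := by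
  letI : MeasurableSpace Ω := m0
  -- `g n ω = f ω (α n ω)` is `H`-measurable
  have hgn : ∀ n, Measurable[H] fun ω => f ω (α n ω) := by
    intro n
    exact hf.comp (Measurable.prodMk measurable_id (hα n))
  -- the pointwise supremum is `H`-measurable
  have hZ : Measurable[H] fun ω => ⨆ n, f ω (α n ω) := Measurable.iSup hgn
  -- `Y ≤ sup` a.e., via minimality
  have hle : ∀ᵐ ω ∂μ, Y ω ≤ ⨆ n, f ω (α n ω) := by
    refine hY_min _ hZ ?_
    filter_upwards [hcover] with ω ⟨n, hn⟩
    rw [hn]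
    exact le_ciSup (hbdd ω) n
  -- `sup ≤ Y` a.e.
  have hge : ∀ n, ∀ᵐ ω ∂μ, f ω (α n ω) ≤ Y ω := by
    intro n
    set T : Set Ω := {ω' | S ω' = α n ω'} with hT_def
    have hT : MeasurableSet[m0] T := measurableSet_eq_fun hS ((hα n).mono hH le_rfl)
    have hT0 : MeasurableSet[m0] T := hT
    set A : Set Ω := {ω | Y ω < f ω (α n ω)} with hA_def
    have hA : MeasurableSet[H] A := measurableSet_lt hY_meas (hgn n)
    have hA0 : MeasurableSet[m0] A := hH A hA
    -- μ (A ∩ T) = 0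
    have hAT : μ (A ∩ T) = 0 := by
      have hsub : A ∩ T ⊆ {ω | ¬ f ω (S ω) ≤ Y ω} := by
        rintro ω ⟨hωA, hωT⟩
        simp only [Set.mem_setOf_eq] at *
        rw [hωT]
        exact not_le.mpr hωA
      exact measure_mono_null hsub hY_ge
    have hInd : Integrable (T.indicator fun _ => (1 : ℝ)) μ :=
      (integrable_const (1 : ℝ)).indicator hT0
    -- set integral of the conditional expectation over A is 0
    have hint : ∫ ω in A, (μ[T.indicator (fun _ => (1 : ℝ)) | H]) ω ∂μ = 0 := by
      rw [setIntegral_condExp hH hInd hA]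
      rw [setIntegral_indicator hT0]
      simp [hAT, Measure.real]
    have hnonneg : 0 ≤ᵐ[μ.restrict A] μ[T.indicator (fun _ => (1 : ℝ)) | H] := by
      refine ae_restrict_of_ae ?_
      exact condExp_nonneg (Filter.Eventually.of_forall fun ω =>
        Set.indicator_nonneg (fun _ _ => zero_le_one) ω)
    have hIntOn : IntegrableOn (μ[T.indicator (fun _ => (1 : ℝ)) | H]) A μ :=
      integrable_condExp.integrableOn
    have hzero : μ[T.indicator (fun _ => (1 : ℝ)) | H] =ᵐ[μ.restrict A] 0 :=
      (setIntegral_eq_zero_iff_of_nonneg_ae hnonneg hIntOn).mp hint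
    have hposA : ∀ᵐ ω ∂μ.restrict A,
        0 < (μ[T.indicator (fun _ => (1 : ℝ)) | H]) ω :=
      ae_restrict_of_ae (hpos n)
    have hfalse : ∀ᵐ _ω ∂μ.restrict A, False := by
      filter_upwards [hzero, hposA] with ω h0 hp
      rw [h0] at hp
      exact lt_irrefl _ hp
    have hA_null : μ A = 0 := by
      have : μ.restrict A = 0 := by
        have := Filter.eventually_false_iff_eq_bot.mp hfalse
        exact ae_eq_bot.mp this
      exact Measure.restrict_eq_zero.mp this
    have : ∀ᵐ ω ∂μ, ω ∉ A := by
      rw [ae_iff]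
      simpa using hA_null
    filter_upwards [this] with ω hω
    exact not_lt.mp hω
  have hge' : ∀ᵐ ω ∂μ, (⨆ n, f ω (α n ω)) ≤ Y ω := by
    rw [← ae_all_iff] at hge
    filter_upwards [hge] with ω hω
    exact ciSup_le hω
  filter_upwards [hle, hge'] with ω h1 h2
  exact le_antisymm h1 h2
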